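/- L^p-continuity of the p-Laplace flux in the singular range: let p ∈ (1, 2] with conjugate exponent p' = p/(p−1). There exists a constant C > 0 depending only on p such that for every measure space (Ω, μ) and all measurable f, g : Ω → ℝ^d with ‖f − g‖_{L^p(μ)} < ∞, one has ‖A∘f − A∘g‖_{L^{p'}(μ)} ≤ C ‖f − g‖_{L^p(μ)}^{p−1}. -/

import Mathlib

open MeasureTheory

/-- The p-Laplace flux `A(τ) = |τ|^{p-2} τ` (with `A(0) = 0`). -/
noncomputable def pFlux (d : ℕ) (p : ℝ) (τ : EuclideanSpace ℝ (Fin d)) :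
    EuclideanSpace ℝ (Fin d) := ‖τ‖ ^ (p - 2) • τ

/-- The `L^q` norm `(∫_Ω |h|^q dμ)^{1/q}` of a vector-valued function, in `[0, ∞]`. -/
noncomputable def vecLpNorm {Ω : Type*} [MeasurableSpace Ω] (μ : Measure Ω) {d : ℕ}
    (h : Ω → EuclideanSpace ℝ (Fin d)) (q : ℝ) : ENNReal :=
  (∫⁻ ω, ENNReal.ofReal (‖h ω‖ ^ q) ∂μ) ^ (1 / q)

/-!
With `α = p - 1 ∈ (0, 1]`, write `A(a) - A(b) = |a|^{α-1} (a - b) + (|a|^{α-1} - |b|^{α-1}) b`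
for `|b| ≤ |a|`. Both terms are bounded by multiples of `|a - b|^α` using only that
`t ↦ t^{α-1}` is nonincreasing, so `A` is `α`-Hölder with constant `3`. Raising this pointwise
bound to the power `p' = p / α` and integrating gives the `L^p → L^{p'}` estimate.
-/

namespace Real

variable {α : ℝ}

theorem rpow_sub_one_mul_le_rpow (hα0 : 0 < α) (hα1 : α ≤ 1) {t u : ℝ} (hu : 0 ≤ u)
    (hut : u ≤ t) : t ^ (α - 1) * u ≤ u ^ α := by
  rcases hu.eq_or_lt with rfl | hu
  · simp [zero_rpow hα0.ne']
  calc t ^ (α - 1) * u ≤ u ^ (α - 1) * u :=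
        mul_le_mul_of_nonneg_right (rpow_le_rpow_of_nonpos hu hut (by linarith)) hu.le
    _ = u ^ α := by rw [rpow_sub_one hu.ne', div_mul_cancel₀ _ hu.ne']

theorem rpow_sub_one_sub_rpow_sub_one_mul_le (hα0 : 0 < α) (hα1 : α ≤ 1) {s t : ℝ}
    (hs : 0 ≤ s) (hst : s ≤ t) : (s ^ (α - 1) - t ^ (α - 1)) * s ≤ (t - s) ^ α := by
  rcases hs.eq_or_lt with rfl | hs
  · simp only [mul_zero]
    positivity
  have ht : 0 < t := hs.trans_le hst
  have hmono : s ^ (α - 1) * s ≤ t ^ (α - 1) * t := by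
    rw [rpow_sub_one hs.ne', rpow_sub_one ht.ne', div_mul_cancel₀ _ hs.ne',
      div_mul_cancel₀ _ ht.ne']
    exact rpow_le_rpow hs.le hst hα0.le
  calc (s ^ (α - 1) - t ^ (α - 1)) * s ≤ t ^ (α - 1) * (t - s) := by linarith
    _ ≤ (t - s) ^ α := rpow_sub_one_mul_le_rpow hα0 hα1 (by linarith) (by linarith)

end Real

section Holder

variable {E : Type*} [SeminormedAddCommGroup E] [NormedSpace ℝ E] {α : ℝ}

theorem norm_rpow_smul_sub_rpow_smul_le_of_norm_le (hα0 : 0 < α) (hα1 : α ≤ 1) {a b : E}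
    (hba : ‖b‖ ≤ ‖a‖) :
    ‖‖a‖ ^ (α - 1) • a - ‖b‖ ^ (α - 1) • b‖ ≤ 3 * ‖a - b‖ ^ α := by
  set t := ‖a‖
  set s := ‖b‖
  set r := ‖a - b‖
  have hr : r ≤ 2 * t := by linarith [norm_sub_le a b]
  have hdiff : t ^ (α - 1) • a - s ^ (α - 1) • b
      = t ^ (α - 1) • (a - b) + (t ^ (α - 1) - s ^ (α - 1)) • b := by
    simp only [smul_sub, sub_smul]
    abel
  have hfirst : t ^ (α - 1) * r ≤ 2 * r ^ α :=
    calc t ^ (α - 1) * r = 2 * (t ^ (α - 1) * (r / 2)) := by ring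
      _ ≤ 2 * (r / 2) ^ α := by
        gcongr
        exact Real.rpow_sub_one_mul_le_rpow hα0 hα1 (by positivity) (by linarith)
      _ ≤ 2 * r ^ α := by gcongr; linarith [norm_nonneg (a - b)]
  have hsecond : |t ^ (α - 1) - s ^ (α - 1)| * s ≤ r ^ α := by
    have hts : t - s ≤ r := norm_sub_norm_le a b
    have hs0 : 0 ≤ s := norm_nonneg b
    rcases hs0.eq_or_lt with hs | hs
    · rw [← hs, mul_zero]
      positivity
    have hanti : t ^ (α - 1) ≤ s ^ (α - 1) := Real.rpow_le_rpow_of_nonpos hs hba (by linarith)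
    rw [abs_sub_comm, abs_of_nonneg (sub_nonneg.2 hanti)]
    calc (s ^ (α - 1) - t ^ (α - 1)) * s
        ≤ (t - s) ^ α := Real.rpow_sub_one_sub_rpow_sub_one_mul_le hα0 hα1 hs0 hba
      _ ≤ r ^ α := by gcongr
  calc ‖t ^ (α - 1) • a - s ^ (α - 1) • b‖
      ≤ ‖t ^ (α - 1) • (a - b)‖ + ‖(t ^ (α - 1) - s ^ (α - 1)) • b‖ :=
        hdiff ▸ norm_add_le _ _
    _ = t ^ (α - 1) * r + |t ^ (α - 1) - s ^ (α - 1)| * s := by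
        rw [norm_smul, norm_smul, Real.norm_eq_abs, Real.norm_eq_abs,
          abs_of_nonneg (by positivity)]
    _ ≤ 3 * r ^ α := by linarith

theorem norm_rpow_smul_sub_rpow_smul_le (hα0 : 0 < α) (hα1 : α ≤ 1) (a b : E) :
    ‖‖a‖ ^ (α - 1) • a - ‖b‖ ^ (α - 1) • b‖ ≤ 3 * ‖a - b‖ ^ α := by
  rcases le_total ‖b‖ ‖a‖ with h | h
  · exact norm_rpow_smul_sub_rpow_smul_le_of_norm_le hα0 hα1 h
  · rw [norm_sub_rev, norm_sub_rev a b]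
    exact norm_rpow_smul_sub_rpow_smul_le_of_norm_le hα0 hα1 h

end Holder

theorem norm_pFlux_sub_pFlux_le {d : ℕ} {p : ℝ} (hp1 : 1 < p) (hp2 : p ≤ 2)
    (a b : EuclideanSpace ℝ (Fin d)) :
    ‖pFlux d p a - pFlux d p b‖ ≤ 3 * ‖a - b‖ ^ (p - 1) := by
  have h := norm_rpow_smul_sub_rpow_smul_le (α := p - 1) (by linarith) (by linarith) a b
  rwa [show p - 1 - 1 = p - 2 by ring] at h

theorem vecLpNorm_le_of_norm_le_mul_rpow {Ω : Type*} [MeasurableSpace Ω] {μ : Measure Ω}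
    {d : ℕ} {F G : Ω → EuclideanSpace ℝ (Fin d)} {C α q : ℝ} (hC : 0 ≤ C) (hα : 0 < α)
    (hq : 0 < q) (hFG : ∀ ω, ‖F ω‖ ≤ C * ‖G ω‖ ^ α) :
    vecLpNorm μ F q ≤ ENNReal.ofReal C * vecLpNorm μ G (α * q) ^ α := by
  have hpow : ∀ ω, ENNReal.ofReal (‖F ω‖ ^ q)
      ≤ ENNReal.ofReal (C ^ q) * ENNReal.ofReal (‖G ω‖ ^ (α * q)) := fun ω ↦ by
    rw [← ENNReal.ofReal_mul (by positivity), Real.rpow_mul (norm_nonneg _),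
      ← Real.mul_rpow hC (by positivity)]
    gcongr
    exact hFG ω
  unfold vecLpNorm
  set I := ∫⁻ ω, ENNReal.ofReal (‖G ω‖ ^ (α * q)) ∂μ
  calc (∫⁻ ω, ENNReal.ofReal (‖F ω‖ ^ q) ∂μ) ^ (1 / q)
      ≤ (ENNReal.ofReal (C ^ q) * I) ^ (1 / q) := by
        rw [← lintegral_const_mul' _ _ ENNReal.ofReal_ne_top]
        gcongr
        exact hpow _
    _ = ENNReal.ofReal C * (I ^ (1 / (α * q))) ^ α := by
        rw [ENNReal.mul_rpow_of_nonneg _ _ (by positivity), ← ENNReal.rpow_mul,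
          ← ENNReal.ofReal_rpow_of_nonneg hC hq.le, ← ENNReal.rpow_mul,
          mul_one_div_cancel hq.ne', ENNReal.rpow_one]
        congr 2
        field_simp

theorem stmt_12.{u} (d : ℕ) (hd : 1 ≤ d) (p p' : ℝ) (hp1 : 1 < p) (hp2 : p ≤ 2)
    (hp' : p' = p / (p - 1)) :
    ∃ C > (0 : ℝ), ∀ (Ω : Type u) [MeasurableSpace Ω] (μ : Measure Ω)
      (f g : Ω → EuclideanSpace ℝ (Fin d)), Measurable f → Measurable g →
      vecLpNorm μ (fun ω => f ω - g ω) p ≠ ⊤ →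
      vecLpNorm μ (fun ω => pFlux d p (f ω) - pFlux d p (g ω)) p' ≤
        ENNReal.ofReal C * vecLpNorm μ (fun ω => f ω - g ω) p ^ (p - 1) := by
  have hp'p : (p - 1) * p' = p := by
    rw [hp']
    field_simp [show p - 1 ≠ 0 by linarith]
  refine ⟨3, by norm_num, fun Ω _ μ f g _ _ _ ↦ ?_⟩
  have h := vecLpNorm_le_of_norm_le_mul_rpow (μ := μ) (q := p') (by norm_num) (by linarith)
    (by rw [hp']; bound) fun ω ↦ norm_pFlux_sub_pFlux_le hp1 hp2 (f ω) (g ω)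
  rwa [hp'p] at h
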